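/- Let O be a split octonion algebra over F and p ∈ O with N(p) = 0 and tr(p) ≠ 0. Then every subalgebra A of O contained in pO satisfies dim_F A ≤ 2, and every 2-dimensional subalgebra contained in pO contains p. -/
import Mathlib
set_option linter.unusedSectionVars false

section Stmt16Aux

open QuadraticMap

variable {F : Type*} [Field F] {O : Type*} [NonAssocRing O] [Module F O]
  [SMulCommClass F O O] [IsScalarTower F O O] (q : QuadraticForm F O)

private theorem aux_qadd (x y : O) : q (x + y) = q x + q y + polar (⇑q) x y := by
  simp only [polar]; ring

private theorem aux_L1 (hmul : ∀ x y : O, q (x * y) = q x * q y) (x y z : O) :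
    polar (⇑q) (x * y) (x * z) = q x * polar (⇑q) y z := by
  have h : x * y + x * z = x * (y + z) := (mul_add x y z).symm
  simp only [polar, h, hmul]
  ring

private theorem aux_L3 (hmul : ∀ x y : O, q (x * y) = q x * q y) (x y z w : O) :
    polar (⇑q) (x * y) (z * w) + polar (⇑q) (z * y) (x * w)
      = polar (⇑q) x z * polar (⇑q) y w := by
  have h := aux_L1 q hmul (x + z) y w
  simp only [add_mul, polar_add_left, polar_add_right, aux_qadd] at h
  have h1 := aux_L1 q hmul x y w
  have h2 := aux_L1 q hmul z y w
  linear_combination h - h1 - h2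

private theorem aux_A (hmul : ∀ x y : O, q (x * y) = q x * q y) (x y z : O) :
    polar (⇑q) (x * y) z + polar (⇑q) y (x * z)
      = polar (⇑q) x 1 * polar (⇑q) y z := by
  simpa only [one_mul] using aux_L3 q hmul x y 1 z

private theorem aux_B (hmul : ∀ x y : O, q (x * y) = q x * q y) (x z w : O) :
    polar (⇑q) x (z * w) + polar (⇑q) z (x * w)
      = polar (⇑q) x z * polar (⇑q) 1 w := by
  simpa only [mul_one] using aux_L3 q hmul x 1 z w

private theorem aux_tmul (hmul : ∀ x y : O, q (x * y) = q x * q y) (u v : O) :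
    polar (⇑q) (u * v) 1 = polar (⇑q) u 1 * polar (⇑q) v 1 - polar (⇑q) u v := by
  have h := aux_A q hmul u v 1
  rw [mul_one] at h
  have hc := polar_comm (⇑q) v u
  linear_combination h - hc

private theorem aux_P0 (hmul : ∀ x y : O, q (x * y) = q x * q y) {f : O} (hf0 : q f = 0) (x y : O) :
    polar (⇑q) (f * x) (f * y) = 0 := by
  rw [aux_L1 q hmul, hf0, zero_mul]

private theorem aux_E1 (hmul : ∀ x y : O, q (x * y) = q x * q y)
    (hnd : ∀ x : O, (∀ y : O, polar (⇑q) x y = 0) → x = 0) {f : O} (hf0 : q f = 0) (hf1 : polar (⇑q) f 1 = 1) (y : O) :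
    f * (f * y) = f * y := by
  have key : ∀ z, polar (⇑q) (f * (f * y) - f * y) z = 0 := by
    intro z
    have hA := aux_A q hmul f (f * y) z
    have hP := aux_P0 q hmul hf0 y z
    rw [hf1, one_mul] at hA
    rw [polar_sub_left]
    linear_combination hA - hP
  exact sub_eq_zero.mp (hnd _ key)

private theorem aux_idem (hmul : ∀ x y : O, q (x * y) = q x * q y)
    (hnd : ∀ x : O, (∀ y : O, polar (⇑q) x y = 0) → x = 0) {f : O} (hf0 : q f = 0) (hf1 : polar (⇑q) f 1 = 1) :
    f * f = f := by
  have key : ∀ z, polar (⇑q) (f * f - f) z = 0 := by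
    intro z
    have hA := aux_A q hmul f f z
    have hP := aux_P0 q hmul hf0 1 z
    rw [mul_one] at hP
    rw [hf1, one_mul] at hA
    rw [polar_sub_left]
    linear_combination hA - hP
  exact sub_eq_zero.mp (hnd _ key)

private theorem aux_Pfix (hmul : ∀ x y : O, q (x * y) = q x * q y) {f u v : O} (hf0 : q f = 0) (hu : f * u = u) (hv : f * v = v) :
    polar (⇑q) u v = 0 := by
  rw [← hu, ← hv]; exact aux_P0 q hmul hf0 u v

private theorem aux_dec {f g : O} (hfg : f + g = 1) (z : O) : f * z + g * z = z := by
  rw [← add_mul, hfg, one_mul]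

private theorem aux_gz {f g : O} (hfg : f + g = 1) (z : O) : g * z = z - f * z :=
  eq_sub_of_add_eq' (aux_dec hfg z)

private theorem aux_fg0 (hmul : ∀ x y : O, q (x * y) = q x * q y)
    (hnd : ∀ x : O, (∀ y : O, polar (⇑q) x y = 0) → x = 0)
    {f g : O} (hfg : f + g = 1) (hf0 : q f = 0) (hf1 : polar (⇑q) f 1 = 1) (z : O) :
    f * (g * z) = 0 := by
  rw [aux_gz hfg, mul_sub, aux_E1 q hmul hnd hf0 hf1, sub_self]

private theorem aux_adj (hmul : ∀ x y : O, q (x * y) = q x * q y)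
    {f g : O} (hfg : f + g = 1) (hf1 : polar (⇑q) f 1 = 1) (s z : O) :
    polar (⇑q) (f * s) z = polar (⇑q) s (g * z) := by
  have hA := aux_A q hmul f s z
  rw [hf1, one_mul] at hA
  rw [aux_gz hfg, polar_sub_right]
  linear_combination hA

private theorem aux_ortho (hnd : ∀ x : O, (∀ y : O, polar (⇑q) x y = 0) → x = 0)
    {f g : O} (hfg : f + g = 1) (s : O)
    (h1 : ∀ z, polar (⇑q) s (f * z) = 0) (h2 : ∀ z, polar (⇑q) s (g * z) = 0) :
    s = 0 := by
  refine hnd s fun z => ?_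
  rw [← aux_dec hfg z, polar_add_right, h1, h2, add_zero]

private theorem aux_tg (hmul : ∀ x y : O, q (x * y) = q x * q y)
    (hnd : ∀ x : O, (∀ y : O, polar (⇑q) x y = 0) → x = 0)
    {f g w : O} (hfg : f + g = 1) (hg0 : q g = 0) (hg1 : polar (⇑q) g 1 = 1)
    (hw : g * w = w) : polar (⇑q) f w = polar (⇑q) 1 w := by
  have hgw : polar (⇑q) g w = 0 :=
    aux_Pfix q hmul hg0 (aux_idem q hmul hnd hg0 hg1) hw
  have h : polar (⇑q) (f + g) w = polar (⇑q) 1 w := by rw [hfg]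
  rw [polar_add_left, hgw, add_zero] at h
  exact h

private theorem aux_G1 (hmul : ∀ x y : O, q (x * y) = q x * q y)
    (hnd : ∀ x : O, (∀ y : O, polar (⇑q) x y = 0) → x = 0)
    {f g u v : O} (hfg : f + g = 1) (hf0 : q f = 0) (hf1 : polar (⇑q) f 1 = 1)
    (hu : f * u = u) (hv : f * v = v) :
    f * (u * v) = polar (⇑q) u 1 • v := by
  have hgv : g * v = 0 := by rw [aux_gz hfg, hv, sub_self]
  have hff : f * f = f := aux_idem q hmul hnd hf0 hf1
  have huf : polar (⇑q) u f = 0 := aux_Pfix q hmul hf0 hu hff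
  have hug : polar (⇑q) u g = polar (⇑q) u 1 := by
    have h : polar (⇑q) u (f + g) = polar (⇑q) u 1 := by rw [hfg]
    rw [polar_add_right, huf, zero_add] at h
    exact h
  have key : ∀ z, polar (⇑q) (f * (u * v) - polar (⇑q) u 1 • v) z = 0 := by
    intro z
    have hL := aux_L3 q hmul u v g z
    rw [hgv, polar_zero_left, add_zero, hug] at hL
    have hadj := aux_adj q hmul hfg hf1 (u * v) z
    rw [polar_sub_left, polar_smul_left, smul_eq_mul, hadj, hL]
    ring
  exact sub_eq_zero.mp (hnd _ key)

private theorem aux_G2 (hmul : ∀ x y : O, q (x * y) = q x * q y)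
    (hnd : ∀ x : O, (∀ y : O, polar (⇑q) x y = 0) → x = 0)
    {f g u w : O} (hfg : f + g = 1) (hf0 : q f = 0) (hf1 : polar (⇑q) f 1 = 1)
    (hg0 : q g = 0) (hg1 : polar (⇑q) g 1 = 1)
    (hu : f * u = u) (hw : g * w = w) :
    u * w = polar (⇑q) w 1 • u - polar (⇑q) u w • f := by
  have hgf : g + f = 1 := by rw [add_comm]; exact hfg
  have hff : f * f = f := aux_idem q hmul hnd hf0 hf1
  have hfw : f * w = 0 := by
    rw [← hw]; exact aux_fg0 q hmul hnd hfg hf0 hf1 w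
  have huf : polar (⇑q) u f = 0 := aux_Pfix q hmul hf0 hu hff
  have hkey0 : ∀ z, polar (⇑q) (u * w) (f * z) = 0 := by
    intro z
    have hL := aux_L3 q hmul u w f z
    rw [hfw, polar_zero_left, add_zero, huf, zero_mul] at hL
    exact hL
  have ha : g * (u * w) = 0 := by
    refine hnd _ fun z => ?_
    rw [aux_adj q hmul hgf hg1 (u * w) z]
    exact hkey0 z
  have hfix : f * (u * w) = u * w := by
    have hd := aux_dec hfg (u * w)
    rw [ha, add_zero] at hd
    exact hd
  have hb : ∀ z, g * z = z → polar (⇑q) (u * w) z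
      = polar (⇑q) 1 w * polar (⇑q) u z - polar (⇑q) z 1 * polar (⇑q) u w := by
    intro z hz
    have hB := aux_B q hmul z u w
    have hzw : g * (z * w) = polar (⇑q) z 1 • w :=
      aux_G1 q hmul hnd hgf hg0 hg1 hz hw
    have hdz : z * w = f * (z * w) + g * (z * w) := (aux_dec hfg _).symm
    have hPu : polar (⇑q) u (f * (z * w)) = 0 := by
      rw [← hu]; exact aux_P0 q hmul hf0 _ _
    have huzw : polar (⇑q) u (z * w) = polar (⇑q) z 1 * polar (⇑q) u w := by
      rw [hdz, polar_add_right, hPu, hzw, polar_smul_right, smul_eq_mul, zero_add]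
    have hc1 := polar_comm (⇑q) (u * w) z
    have hc2 := polar_comm (⇑q) z u
    linear_combination hc1 + hB - huzw + polar (⇑q) 1 w * hc2
  have key : ∀ z, polar (⇑q)
      (u * w - (polar (⇑q) w 1 • u - polar (⇑q) u w • f)) z = 0 := by
    intro z
    rw [← aux_dec hfg z, polar_add_right]
    have h1 : polar (⇑q)
        (u * w - (polar (⇑q) w 1 • u - polar (⇑q) u w • f)) (f * z) = 0 := by
      have hd : f * (u * w - (polar (⇑q) w 1 • u - polar (⇑q) u w • f))
          = u * w - (polar (⇑q) w 1 • u - polar (⇑q) u w • f) := by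
        rw [mul_sub, mul_sub, mul_smul_comm, mul_smul_comm, hfix, hu, hff]
      rw [← hd]
      exact aux_P0 q hmul hf0 _ _
    have h2 : polar (⇑q)
        (u * w - (polar (⇑q) w 1 • u - polar (⇑q) u w • f)) (g * z) = 0 := by
      have hz' : g * (g * z) = g * z := aux_E1 q hmul hnd hg0 hg1 z
      have hbb := hb (g * z) hz'
      have hfz' : polar (⇑q) f (g * z) = polar (⇑q) 1 (g * z) :=
        aux_tg q hmul hnd hfg hg0 hg1 hz'
      have hc1 := polar_comm (⇑q) 1 w
      have hc2 := polar_comm (⇑q) 1 (g * z)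
      rw [polar_sub_left, polar_sub_left, polar_smul_left, polar_smul_left,
        smul_eq_mul, smul_eq_mul]
      linear_combination hbb + polar (⇑q) u (g * z) * hc1
        + polar (⇑q) u w * hfz' + polar (⇑q) u w * hc2
    rw [h1, h2, add_zero]
  exact sub_eq_zero.mp (hnd _ key)

private theorem aux_E3 (hmul : ∀ x y : O, q (x * y) = q x * q y)
    (hnd : ∀ x : O, (∀ y : O, polar (⇑q) x y = 0) → x = 0)
    {f g u : O} (hfg : f + g = 1) (hf0 : q f = 0) (hf1 : polar (⇑q) f 1 = 1)
    (hg0 : q g = 0) (hg1 : polar (⇑q) g 1 = 1)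
    (hu : f * u = u) :
    u * f = polar (⇑q) u 1 • f := by
  have hgf : g + f = 1 := by rw [add_comm]; exact hfg
  have hff : f * f = f := aux_idem q hmul hnd hf0 hf1
  have hGa : f * (u * f) = polar (⇑q) u 1 • f :=
    aux_G1 q hmul hnd hfg hf0 hf1 hu hff
  have hs : g * (u * f) = 0 := by
    refine hnd _ fun z0 => ?_
    rw [← aux_dec hfg z0, polar_add_right]
    have hpart2 : polar (⇑q) (g * (u * f)) (g * z0) = 0 := aux_P0 q hmul hg0 _ _
    have hyfix : f * (f * z0) = f * z0 := aux_E1 q hmul hnd hf0 hf1 z0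
    have hpart1 : polar (⇑q) (g * (u * f)) (f * z0) = 0 := by
      set y := f * z0 with hy
      have hadj : polar (⇑q) (g * (u * f)) y = polar (⇑q) (u * f) (f * y) :=
        aux_adj q hmul hgf hg1 (u * f) y
      rw [hadj, hyfix]
      -- now show polar (u*f) y = 0
      have hL := aux_L3 q hmul u f f y
      rw [hff, hyfix] at hL
      have huf0 : polar (⇑q) u f = 0 := aux_Pfix q hmul hf0 hu hff
      rw [huf0, zero_mul] at hL
      -- hL : polar (u*f) y + polar (f*f=f...) : polar (u*f) y + polar f (u*y) = 0
      -- compute polar f (u*y) = 0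
      have hGy : f * (u * y) = polar (⇑q) u 1 • y :=
        aux_G1 q hmul hnd hfg hf0 hf1 hu hyfix
      have hdec : u * y = f * (u * y) + g * (u * y) := (aux_dec hfg _).symm
      have hfy0 : polar (⇑q) f y = 0 := aux_Pfix q hmul hf0 hff hyfix
      have hguyfix : g * (g * (u * y)) = g * (u * y) := aux_E1 q hmul hnd hg0 hg1 _
      have hfguy : polar (⇑q) f (g * (u * y)) = polar (⇑q) 1 (g * (u * y)) :=
        aux_tg q hmul hnd hfg hg0 hg1 hguyfix
      have hguy : g * (u * y) = u * y - f * (u * y) := aux_gz hfg _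
      have e1 : polar (⇑q) 1 (u * y)
          = polar (⇑q) u 1 * polar (⇑q) y 1 - polar (⇑q) u y := by
        rw [polar_comm (⇑q) 1 (u * y)]
        exact aux_tmul q hmul u y
      have huy0 : polar (⇑q) u y = 0 := aux_Pfix q hmul hf0 hu hyfix
      have e2 : polar (⇑q) 1 (f * (u * y)) = polar (⇑q) u 1 * polar (⇑q) y 1 := by
        rw [hGy, polar_smul_right, smul_eq_mul, polar_comm (⇑q) 1 y]
      have hfuy : polar (⇑q) f (u * y) = 0 := by
        rw [hdec, polar_add_right, hGy, polar_smul_right, smul_eq_mul, hfy0,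
          mul_zero, zero_add, hfguy, hguy, polar_sub_right, e1, e2, huy0]
        ring
      linear_combination hL - hfuy
    rw [hpart1, hpart2, add_zero]
  have hd := aux_dec hfg (u * f)
  rw [hs, add_zero] at hd
  rw [← hd, hGa]

end Stmt16Aux

open QuadraticMap

/-- In a split octonion algebra, for `p` with `N(p) = 0` and
`tr(p) ≠ 0`, every subalgebra contained in `pO` has dimension ≤ 2, and every
2-dimensional subalgebra contained in `pO` contains `p`. -/
theorem stmt_16 (F : Type*) [Field F] (O : Type*) [NonAssocRing O] [Module F O]
    [SMulCommClass F O O] [IsScalarTower F O O]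
    (q : QuadraticForm F O)
    (hmul : ∀ x y : O, q (x * y) = q x * q y)
    (hnd : ∀ x : O, (∀ y : O, QuadraticMap.polar (⇑q) x y = 0) → x = 0)
    (hdim : Module.finrank F O = 8)
    (hsplit : ∃ x : O, x ≠ 0 ∧ q x = 0)
    (p : O) (hpN : q p = 0) (hpT : QuadraticMap.polar (⇑q) p 1 ≠ 0)
    (A : Submodule F O)
    (hA : ∀ x ∈ A, ∀ y ∈ A, x * y ∈ A)
    (hApO : A ≤ LinearMap.range (LinearMap.mulLeft F p)) :
    Module.finrank F A ≤ 2 ∧ (Module.finrank F A = 2 → p ∈ A) := by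
  classical
  have hfin : FiniteDimensional F O :=
    FiniteDimensional.of_finrank_pos (by rw [hdim]; norm_num)
  -- q 1 = 1
  have hq1 : q 1 = 1 := by
    have hO : Nontrivial O :=
      Module.nontrivial_of_finrank_pos (R := F) (by rw [hdim]; norm_num)
    obtain ⟨x0, hx0⟩ : ∃ x : O, q x ≠ 0 := by
      by_contra hcon
      push_neg at hcon
      obtain ⟨x, hx⟩ := exists_ne (0 : O)
      exact hx (hnd x fun y => by simp only [polar, hcon]; ring)
    have h := hmul 1 x0
    rw [one_mul] at h
    have h2 : (q 1 - 1) * q x0 = 0 := by linear_combination -h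
    rcases mul_eq_zero.mp h2 with h' | h'
    · exact sub_eq_zero.mp h'
    · exact absurd h' hx0
  obtain ⟨τ, hτ⟩ : ∃ t : F, t = QuadraticMap.polar (⇑q) p 1 := ⟨_, rfl⟩
  have hpT' : τ ≠ 0 := by rw [hτ]; exact hpT
  obtain ⟨e, he⟩ : ∃ e : O, e = τ⁻¹ • p := ⟨_, rfl⟩
  have he0 : q e = 0 := by rw [he, QuadraticMap.map_smul, hpN]; simp
  have he1 : polar (⇑q) e 1 = 1 := by
    rw [he, polar_smul_left, smul_eq_mul, ← hτ, inv_mul_cancel₀ hpT']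
  have hpe : p = τ • e := by rw [he, smul_smul, mul_inv_cancel₀ hpT', one_smul]
  obtain ⟨g, hg⟩ : ∃ g : O, g = 1 - e := ⟨_, rfl⟩
  have hfg : e + g = 1 := by rw [hg]; abel
  have hgf : g + e = 1 := by rw [add_comm]; exact hfg
  have hg0 : q g = 0 := by
    have h := aux_qadd q 1 (-e)
    rw [← sub_eq_add_neg, QuadraticMap.map_neg, polar_neg_right] at h
    rw [hg, h, hq1, he0, polar_comm (⇑q) 1 e, he1]
    ring
  have hg1 : polar (⇑q) g 1 = 1 := by
    have h11 : polar (⇑q) (1 : O) 1 = 2 := by rw [polar_self, hq1]; norm_num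
    rw [hg, polar_sub_left, h11, he1]
    norm_num
  have hee : e * e = e := aux_idem q hmul hnd he0 he1
  have hge : polar (⇑q) g e = 1 := by
    have h : polar (⇑q) (e + g) e = polar (⇑q) 1 e := by rw [hfg]
    have hee0 : polar (⇑q) e e = 0 := by rw [polar_self, he0]; simp
    rw [polar_add_left, hee0, zero_add] at h
    rw [h, polar_comm, he1]
  -- every element of A is fixed by left multiplication by e
  have heA : ∀ a ∈ A, e * a = a := by
    intro a ha
    obtain ⟨y, hy⟩ := hApO ha
    simp only [LinearMap.mulLeft_apply] at hy
    calc e * a = e * (p * y) := by rw [hy]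
      _ = e * (τ • (e * y)) := by rw [hpe, smul_mul_assoc]
      _ = τ • (e * (e * y)) := by rw [mul_smul_comm]
      _ = τ • (e * y) := by rw [aux_E1 q hmul hnd he0 he1 y]
      _ = (τ • e) * y := by rw [smul_mul_assoc]
      _ = p * y := by rw [← hpe]
      _ = a := hy
  -- multiplication on A
  have hA0 : ∀ a ∈ A, ∀ b ∈ A, a * b = polar (⇑q) a 1 • b := by
    intro a ha b hb
    have h := aux_G1 q hmul hnd hfg he0 he1 (heA a ha) (heA b hb)
    rw [heA _ (hA a ha b hb)] at h
    exact h
  -- the crucial linear dependence lemma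
  have hC2 : ∀ u v : O, e * u = u → e * v = v → polar (⇑q) u 1 = 0 →
      polar (⇑q) v 1 = 0 → u * v = 0 → u ≠ 0 → ∃ μ : F, v = μ • u := by
    intro u v hu hv htu htv huv hune
    have hgu : polar (⇑q) g u = 0 := by
      have h : polar (⇑q) (e + g) u = polar (⇑q) 1 u := by rw [hfg]
      have heu : polar (⇑q) e u = 0 := aux_Pfix q hmul he0 hee hu
      rw [polar_add_left, heu, zero_add] at h
      rw [h, polar_comm]
      exact htu
    have key : ∀ w w', g * w = w → g * w' = w' →
        polar (⇑q) w v * polar (⇑q) u w' = polar (⇑q) u w * polar (⇑q) v w' := by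
      intro w w' hw hw'
      have hL := aux_L3 q hmul u v w w'
      rw [huv, polar_zero_left, zero_add] at hL
      have hwv := aux_G2 q hmul hnd hgf hg0 hg1 he0 he1 hw hv
      rw [htv, zero_smul, zero_sub] at hwv
      have huw' := aux_G2 q hmul hnd hfg he0 he1 hg0 hg1 hu hw'
      rw [hwv, huw', polar_neg_left, polar_smul_left, polar_sub_right,
        polar_smul_right, polar_smul_right, smul_eq_mul, smul_eq_mul, smul_eq_mul,
        hgu, hge] at hL
      linear_combination hL
    obtain ⟨z0, hz0⟩ : ∃ z, polar (⇑q) u z ≠ 0 := by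
      by_contra hcon
      push_neg at hcon
      exact hune (hnd u hcon)
    have hw0fix : g * (g * z0) = g * z0 := aux_E1 q hmul hnd hg0 hg1 z0
    have hw0 : polar (⇑q) u (g * z0) ≠ 0 := by
      intro hcon
      apply hz0
      have h00 : polar (⇑q) u (e * z0) = 0 := by
        rw [← hu]; exact aux_P0 q hmul he0 _ _
      rw [← aux_dec hfg z0, polar_add_right, h00, zero_add]
      exact hcon
    obtain ⟨μ, hμdef⟩ : ∃ m : F, m = polar (⇑q) v (g * z0) / polar (⇑q) u (g * z0) :=
      ⟨_, rfl⟩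
    have hall : ∀ z, polar (⇑q) (v - μ • u) z = 0 := by
      intro z
      rw [← aux_dec hfg z, polar_add_right, polar_sub_left, polar_sub_left,
        polar_smul_left, polar_smul_left, smul_eq_mul, smul_eq_mul]
      have h1 : polar (⇑q) v (e * z) = 0 := by
        rw [← hv]; exact aux_P0 q hmul he0 _ _
      have h2 : polar (⇑q) u (e * z) = 0 := by
        rw [← hu]; exact aux_P0 q hmul he0 _ _
      have hgz : g * (g * z) = g * z := aux_E1 q hmul hnd hg0 hg1 z
      have hk := key (g * z) (g * z0) hgz hw0fix
      have hcc := polar_comm (⇑q) (g * z) v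
      have h3 : polar (⇑q) v (g * z) = μ * polar (⇑q) u (g * z) := by
        rw [hμdef, div_mul_eq_mul_div, eq_div_iff hw0]
        linear_combination hk - polar (⇑q) u (g * z0) * hcc
      rw [h1, h2, h3]
      ring
    exact ⟨μ, by rw [← sub_eq_zero]; exact hnd _ hall⟩
  -- decomposition of elements of A
  have hkeyAB : ∀ a, a ∈ A → a ≠ 0 → polar (⇑q) a 1 = 0 →
      ∀ b ∈ A, ∃ μ : F, b = μ • a + polar (⇑q) b 1 • e := by
    intro a haA hane hta b hb
    set b' := b - polar (⇑q) b 1 • e with hb'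
    have hb'fix : e * b' = b' := by
      rw [hb', mul_sub, mul_smul_comm, heA b hb, hee]
    have htb' : polar (⇑q) b' 1 = 0 := by
      rw [hb', polar_sub_left, polar_smul_left, smul_eq_mul, he1, mul_one, sub_self]
    have hab' : a * b' = 0 := by
      have h1 : a * b = polar (⇑q) a 1 • b := hA0 a haA b hb
      have h2 : a * e = polar (⇑q) a 1 • e :=
        aux_E3 q hmul hnd hfg he0 he1 hg0 hg1 (heA a haA)
      rw [hb', mul_sub, mul_smul_comm, h1, h2, hta, zero_smul, zero_smul,
        smul_zero, sub_zero]
    obtain ⟨μ, hμ⟩ := hC2 a b' (heA a haA) hb'fix hta htb' hab' hane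
    refine ⟨μ, ?_⟩
    rw [← hμ, hb']
    abel
  -- dichotomy helper
  have hone : (¬∃ a, a ∈ A ∧ a ≠ 0 ∧ polar (⇑q) a 1 = 0) →
      Module.finrank F A ≤ 1 := by
    intro hex
    push_neg at hex
    let T : A →ₗ[F] F := (((QuadraticMap.polarBilin q).flip) 1).comp A.subtype
    have hTinj : Function.Injective T := by
      rw [← LinearMap.ker_eq_bot]
      rw [eq_bot_iff]
      intro x hx
      simp only [LinearMap.mem_ker, LinearMap.comp_apply, Submodule.subtype_apply,
        LinearMap.flip_apply, QuadraticMap.polarBilin_apply_apply, T] at hx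
      by_cases hxz : (x : O) = 0
      · simpa [Submodule.mem_bot] using Subtype.ext hxz
      · exact absurd hx (hex (x : O) x.2 hxz)
    have hle := LinearMap.finrank_le_finrank_of_injective hTinj
    rwa [Module.finrank_self] at hle
  constructor
  · -- dimension bound
    by_cases hex : ∃ a, a ∈ A ∧ a ≠ 0 ∧ polar (⇑q) a 1 = 0
    · obtain ⟨a, haA, hane, hta⟩ := hex
      have hle : A ≤ Submodule.span F {a, e} := by
        intro b hb
        obtain ⟨μ, hμ⟩ := hkeyAB a haA hane hta b hb
        rw [hμ]
        have ha' : a ∈ ({a, e} : Set O) := by simp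
        have he' : e ∈ ({a, e} : Set O) := by simp
        exact Submodule.add_mem _
          (Submodule.smul_mem _ _ (Submodule.subset_span ha'))
          (Submodule.smul_mem _ _ (Submodule.subset_span he'))
      have h1 : Module.finrank F A ≤ Module.finrank F (Submodule.span F ({a, e} : Set O)) :=
        Submodule.finrank_mono hle
      have h2 : Module.finrank F (Submodule.span F ({a, e} : Set O)) ≤ 2 := by
        have h3 := finrank_span_le_card (R := F) ({a, e} : Set O)
        have h4 : ({a, e} : Set O).toFinset.card ≤ 2 := by
          rw [Set.toFinset_insert, Set.toFinset_singleton]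
          exact le_trans (Finset.card_insert_le _ _) (by simp)
        omega
      omega
    · exact le_trans (hone hex) (by norm_num)
  · -- 2-dimensional case
    intro h2
    have hex : ∃ a, a ∈ A ∧ a ≠ 0 ∧ polar (⇑q) a 1 = 0 := by
      by_contra hcon
      have := hone hcon
      omega
    obtain ⟨a, haA, hane, hta⟩ := hex
    have hexb : ∃ b ∈ A, polar (⇑q) b 1 ≠ 0 := by
      by_contra hcon
      push_neg at hcon
      have hle : A ≤ Submodule.span F {a} := by
        intro b hb
        obtain ⟨μ, hμ⟩ := hkeyAB a haA hane hta b hb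
        rw [hμ, hcon b hb, zero_smul, add_zero]
        exact Submodule.smul_mem _ _ (Submodule.mem_span_singleton_self a)
      have hr1 : Module.finrank F A ≤ 1 := by
        have := Submodule.finrank_mono (s := A) hle
        rwa [finrank_span_singleton hane] at this
      omega
    obtain ⟨b, hbA, htb⟩ := hexb
    obtain ⟨μ, hμ⟩ := hkeyAB a haA hane hta b hbA
    have hbA' : b - μ • a ∈ A := A.sub_mem hbA (A.smul_mem _ haA)
    have hbe : b - μ • a = polar (⇑q) b 1 • e := by
      conv_lhs => rw [hμ]
      abel
    have heAmem : e ∈ A := by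
      have hm := A.smul_mem (polar (⇑q) b 1)⁻¹ hbA'
      rw [hbe, smul_smul, inv_mul_cancel₀ htb, one_smul] at hm
      exact hm
    rw [hpe]
    exact A.smul_mem _ heAmem
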